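/- Let q : ℝ^3 → ℂ be continuous and integrable, and assume its Fourier transform q̂ is integrable and satisfies ∫_{ℝ^3} (1+‖ξ‖^2)^2 |q̂(ξ)|^2 dξ < ∞. With ‖q‖_{H^2} := (2π)^{-3} ( ∫_{ℝ^3} (1+‖ξ‖^2)^2 |q̂(ξ)|^2 dξ )^{1/2} and ‖q‖_{L^2} := (2π)^{-3} ( ∫_{ℝ^3} |q̂(ξ)|^2 dξ )^{1/2}, for every z ∈ ℝ^3 and all 0 < k_min ≤ k_max, | q(z) − (2π)^{-3} ∫_{k_min ≤ ‖ξ‖ ≤ k_max} q̂(ξ) e^{i⟨z,ξ⟩} dξ | ≤ 2√π ( k_max^{-1/2} ‖q‖_{H^2} + (√3/3) k_min^{3/2} ‖q‖_{L^2} ). In particular the truncated indicator I^∞_K satisfies |I^∞_K(z) − q(z)| = O(k_max^{-1/2}) + O(k_min^{3/2}). -/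

import Mathlib

/-!
Fourier inversion writes `q z` as `(2π)⁻³ ∫ q̂(ξ) e^{i⟨z,ξ⟩} dξ` over all of `ℝ³`, so the
truncation error is the same integral over the ball `‖ξ‖ < kmin` and the exterior
`‖ξ‖ > kmax`, bounded by the integrals of `|q̂|` there. On the ball, Cauchy–Schwarz against `1`
gives `√(vol B(0, kmin)) ‖q̂‖₂ = 2√π (√3/3) kmin^{3/2} ‖q̂‖₂`. On the exterior, Cauchy–Schwarz
against the weight `(1 + ‖ξ‖²)⁻¹` gives the factor
`(∫_{‖ξ‖ > kmax} (1 + ‖ξ‖²)⁻²)^{1/2} ≤ (4π ∫_{kmax}^∞ r⁻² dr)^{1/2} = 2√π kmax^{-1/2}`.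
-/

open MeasureTheory Real Set FourierTransform

local notation "ℝ³" => EuclideanSpace ℝ (Fin 3)

section SetIntegral

variable {α E : Type*} [MeasurableSpace α] [NormedAddCommGroup E] {μ : Measure α}

theorem integral_mul_le_sqrt_mul_sqrt {f g : α → ℝ} (hf0 : 0 ≤ᵐ[μ] f) (hg0 : 0 ≤ᵐ[μ] g)
    (hf : MemLp f 2 μ) (hg : MemLp g 2 μ) :
    ∫ x, f x * g x ∂μ ≤ √(∫ x, f x ^ 2 ∂μ) * √(∫ x, g x ^ 2 ∂μ) := by
  simpa [sqrt_eq_rpow] using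
    integral_mul_le_Lp_mul_Lq_of_nonneg HolderConjugate.two_two hf0 hg0
      (by simpa using hf) (by simpa using hg)

theorem setIntegral_norm_le_sqrt_mul_sqrt {s : Set α} {f : α → E} {w : α → ℝ}
    (hw : ∀ x, 0 < w x) (hwm : AEStronglyMeasurable w μ) (hf : AEStronglyMeasurable f μ)
    (hw2 : IntegrableOn (fun x ↦ (w x)⁻¹ ^ 2) s μ)
    (hwf : Integrable (fun x ↦ w x ^ 2 * ‖f x‖ ^ 2) μ) :
    ∫ x in s, ‖f x‖ ∂μ ≤ √(∫ x in s, (w x)⁻¹ ^ 2 ∂μ) * √(∫ x, w x ^ 2 * ‖f x‖ ^ 2 ∂μ) := by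
  have hfactor : ∀ x, ‖f x‖ = (w x)⁻¹ * (w x * ‖f x‖) := fun x ↦
    (inv_mul_cancel_left₀ (hw x).ne' _).symm
  have hwf' : Integrable (fun x ↦ (w x * ‖f x‖) ^ 2) μ := by simpa only [mul_pow] using hwf
  calc ∫ x in s, ‖f x‖ ∂μ = ∫ x in s, (w x)⁻¹ * (w x * ‖f x‖) ∂μ := by simp only [← hfactor]
    _ ≤ √(∫ x in s, (w x)⁻¹ ^ 2 ∂μ) * √(∫ x in s, (w x * ‖f x‖) ^ 2 ∂μ) :=
      integral_mul_le_sqrt_mul_sqrt (.of_forall fun x ↦ (inv_pos.2 (hw x)).le)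
        (.of_forall fun x ↦ mul_nonneg (hw x).le (norm_nonneg _))
        ((memLp_two_iff_integrable_sq hwm.aemeasurable.inv.aestronglyMeasurable.restrict).2 hw2)
        ((memLp_two_iff_integrable_sq (hwm.mul hf.norm).restrict).2 hwf'.integrableOn)
    _ ≤ √(∫ x in s, (w x)⁻¹ ^ 2 ∂μ) * √(∫ x, w x ^ 2 * ‖f x‖ ^ 2 ∂μ) := by
      gcongr
      simpa only [mul_pow] using setIntegral_le_integral hwf' (.of_forall fun x ↦ sq_nonneg _)

theorem setIntegral_norm_le_sqrt_measureReal_mul_sqrt {s : Set α} {f : α → E}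
    (hs : μ s ≠ ⊤) (hf : AEStronglyMeasurable f μ) (hf2 : Integrable (fun x ↦ ‖f x‖ ^ 2) μ) :
    ∫ x in s, ‖f x‖ ∂μ ≤ √(μ.real s) * √(∫ x, ‖f x‖ ^ 2 ∂μ) := by
  simpa using setIntegral_norm_le_sqrt_mul_sqrt (w := fun _ ↦ 1) (fun _ ↦ one_pos)
    aestronglyMeasurable_const hf (by simpa using integrableOn_const (C := (1 : ℝ)) hs)
    (by simpa using hf2)

theorem norm_setIntegral_le_add_of_subset_union {s t u : Set α} {F : α → E} [NormedSpace ℝ E]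
    (hF : Integrable F μ) (h : s ⊆ t ∪ u) :
    ‖∫ x in s, F x ∂μ‖ ≤ ∫ x in t, ‖F x‖ ∂μ + ∫ x in u, ‖F x‖ ∂μ :=
  calc ‖∫ x in s, F x ∂μ‖ ≤ ∫ x in s, ‖F x‖ ∂μ := norm_integral_le_integral_norm _
    _ ≤ ∫ x in t ∪ u, ‖F x‖ ∂μ :=
      setIntegral_mono_set hF.norm.integrableOn (.of_forall fun _ ↦ norm_nonneg _) h.eventuallyLE
    _ ≤ ∫ x, ‖F x‖ ∂(μ.restrict t + μ.restrict u) :=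
      integral_mono_measure (Measure.restrict_union_le t u) (.of_forall fun _ ↦ norm_nonneg _)
        (hF.norm.restrict.add_measure hF.norm.restrict)
    _ = ∫ x in t, ‖F x‖ ∂μ + ∫ x in u, ‖F x‖ ∂μ :=
      integral_add_measure hF.norm.integrableOn hF.norm.integrableOn

theorem integrable_norm_sq_of_one_add_norm_sq_sq_mul {V : Type*} [NormedAddCommGroup V]
    [MeasurableSpace V] {μ : Measure V} {f : V → E} (hf : AEStronglyMeasurable f μ)
    (h : Integrable (fun ξ ↦ (1 + ‖ξ‖ ^ 2) ^ 2 * ‖f ξ‖ ^ 2) μ) :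
    Integrable (fun ξ ↦ ‖f ξ‖ ^ 2) μ :=
  h.mono' (hf.norm.pow 2) <| .of_forall fun ξ ↦ by
    rw [norm_of_nonneg (by positivity)]
    exact le_mul_of_one_le_left (by positivity) (one_le_pow₀ (by nlinarith [sq_nonneg ‖ξ‖]))

end SetIntegral

section AngularFourier

variable {V : Type*} [NormedAddCommGroup V] [InnerProductSpace ℝ V] [MeasurableSpace V]
  [BorelSpace V] [FiniteDimensional ℝ V]

/-- The paper's Fourier transform `q̂`. -/
noncomputable def angularFourier (q : V → ℂ) (ξ : V) : ℂ :=
  ∫ y, q y * Complex.exp (-(Complex.I * ((inner ℝ ξ y : ℝ) : ℂ)))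

theorem fourier_eq_angularFourier (q : V → ℂ) (w : V) :
    𝓕 q w = angularFourier q ((2 * π) • w) := by
  rw [Real.fourier_eq', angularFourier]
  congr 1 with y
  rw [smul_eq_mul, mul_comm, real_inner_smul_left, real_inner_comm]
  push_cast
  ring_nf

theorem angularFourier_inversion {q : V → ℂ} (hq : Integrable q) {z : V} (hz : ContinuousAt q z)
    (hq' : Integrable (angularFourier q)) :
    q z = ((2 * π : ℂ) ^ Module.finrank ℝ V)⁻¹ *
      ∫ ξ, angularFourier q ξ * Complex.exp (Complex.I * ((inner ℝ z ξ : ℝ) : ℂ)) := by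
  have hfourier : 𝓕 q = fun w ↦ angularFourier q ((2 * π) • w) :=
    funext (fourier_eq_angularFourier q)
  have hfourier_int : Integrable (𝓕 q) := hfourier ▸ hq'.comp_smul (by positivity)
  rw [← hq.fourierInv_fourier_eq hfourier_int hz, Real.fourierInv_eq']
  set f : V → ℂ := fun ξ ↦
    angularFourier q ξ * Complex.exp (Complex.I * ((inner ℝ z ξ : ℝ) : ℂ))
  calc ∫ w, Complex.exp (↑(2 * π * inner ℝ w z) * Complex.I) • 𝓕 q w
      = ∫ w, f ((2 * π) • w) := by
        congr 1 with w
        simp only [f, fourier_eq_angularFourier, smul_eq_mul, real_inner_smul_right,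
          real_inner_comm w z]
        push_cast
        ring_nf
    _ = ((2 * π) ^ Module.finrank ℝ V)⁻¹ • ∫ ξ, f ξ :=
        Measure.integral_comp_smul_of_nonneg volume f (2 * π) (hR := by positivity)
    _ = _ := by
        rw [Complex.real_smul]
        push_cast
        rfl

theorem norm_sub_setIntegral_annulus_le {q : V → ℂ} (hq : Integrable q) {z : V}
    (hz : ContinuousAt q z) (hq' : Integrable (angularFourier q)) (a b : ℝ) :
    ‖q z - ((2 * π : ℂ) ^ Module.finrank ℝ V)⁻¹ * ∫ ξ in {ξ | a ≤ ‖ξ‖ ∧ ‖ξ‖ ≤ b},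
        angularFourier q ξ * Complex.exp (Complex.I * ((inner ℝ z ξ : ℝ) : ℂ))‖ ≤
      ((2 * π) ^ Module.finrank ℝ V)⁻¹ * ((∫ ξ in Metric.ball 0 a, ‖angularFourier q ξ‖) +
        ∫ ξ in {ξ | b < ‖ξ‖}, ‖angularFourier q ξ‖) := by
  set G : V → ℂ := fun ξ ↦
    angularFourier q ξ * Complex.exp (Complex.I * ((inner ℝ z ξ : ℝ) : ℂ))
  have hG : Integrable G :=
    hq'.mul_bdd (by fun_prop) (.of_forall fun ξ ↦ (Complex.norm_exp_I_mul_ofReal _).le)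
  have hT : MeasurableSet {ξ : V | a ≤ ‖ξ‖ ∧ ‖ξ‖ ≤ b} :=
    (measurableSet_le measurable_const measurable_norm).inter
      (measurableSet_le measurable_norm measurable_const)
  have hcompl : {ξ : V | a ≤ ‖ξ‖ ∧ ‖ξ‖ ≤ b}ᶜ ⊆ Metric.ball 0 a ∪ {ξ | b < ‖ξ‖} := fun ξ hξ ↦ by
    simp only [mem_compl_iff, mem_ofPred_eq, not_and_or, not_le] at hξ
    simpa using hξ
  rw [angularFourier_inversion hq hz hq', ← integral_add_compl hT hG, mul_add,
    add_sub_cancel_left, norm_mul, norm_inv, norm_pow, norm_mul, Complex.norm_ofNat,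
    Complex.norm_real, norm_of_nonneg pi_pos.le]
  gcongr
  simpa only [G, norm_mul, Complex.norm_exp_I_mul_ofReal, mul_one] using
    norm_setIntegral_le_add_of_subset_union hG hcompl

end AngularFourier

theorem integrable_inv_one_add_norm_sq_sq {V : Type*} [NormedAddCommGroup V]
    [InnerProductSpace ℝ V] [FiniteDimensional ℝ V] [MeasurableSpace V] [BorelSpace V]
    (hV : Module.finrank ℝ V < 4) :
    Integrable (fun ξ : V ↦ ((1 + ‖ξ‖ ^ 2)⁻¹) ^ 2) := by
  refine (integrable_rpow_neg_one_add_norm_sq (r := 4) (by exact_mod_cast hV)).congr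
    (.of_forall fun ξ ↦ ?_)
  dsimp only
  rw [show -(4 : ℝ) / 2 = -(2 : ℕ) by norm_num, rpow_neg (by positivity), rpow_natCast, inv_pow]

theorem integral_norm_gt_eq_four_pi_mul {k : ℝ} (hk : 0 ≤ k) (f : ℝ → ℝ) :
    ∫ ξ : ℝ³ in {ξ | k < ‖ξ‖}, f ‖ξ‖ = 4 * π * ∫ r in Ioi k, r ^ 2 * f r := by
  have hset : {ξ : ℝ³ | k < ‖ξ‖} = (‖·‖) ⁻¹' Ioi k := rfl
  have hind : ((‖·‖) ⁻¹' Ioi k).indicator (fun ξ : ℝ³ ↦ f ‖ξ‖) =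
      fun ξ ↦ (Ioi k).indicator f ‖ξ‖ :=
    funext fun _ ↦ indicator_comp_right (‖·‖)
  have hradial : (fun r : ℝ ↦ r ^ (3 - 1) • (Ioi k).indicator f r) =
      (Ioi k).indicator (fun r ↦ r ^ 2 * f r) := by
    ext r
    by_cases hr : r ∈ Ioi k <;> simp [hr]
  rw [← integral_indicator (measurableSet_lt measurable_const measurable_norm), hset,
    hind, integral_fun_norm_addHaar volume ((Ioi k).indicator f),
    finrank_euclideanSpace_fin, hradial, setIntegral_indicator measurableSet_Ioi,
    inter_eq_self_of_subset_right (Ioi_subset_Ioi hk), measureReal_def,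
    EuclideanSpace.volume_ball_fin_three]
  simp only [ENNReal.ofReal_one, one_pow, one_mul,
    ENNReal.toReal_ofReal (by positivity : 0 ≤ π * 4 / 3), nsmul_eq_mul, smul_eq_mul]
  ring

theorem integral_Ioi_sq_mul_inv_one_add_sq_sq_le {k : ℝ} (hk : 0 < k) :
    ∫ r in Ioi k, r ^ 2 * ((1 + r ^ 2)⁻¹) ^ 2 ≤ k⁻¹ :=
  calc ∫ r in Ioi k, r ^ 2 * ((1 + r ^ 2)⁻¹) ^ 2 ≤ ∫ r in Ioi k, r ^ (-2 : ℝ) := by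
        refine integral_mono_of_nonneg (.of_forall fun r ↦ by positivity)
          (integrableOn_Ioi_rpow_of_lt (by norm_num) hk) ?_
        filter_upwards [ae_restrict_mem measurableSet_Ioi] with r (hr : k < r)
        have hr0 : 0 < r := hk.trans hr
        rw [show (-2 : ℝ) = -(2 : ℕ) by norm_num, rpow_neg hr0.le, rpow_natCast]
        field_simp
        nlinarith [pow_pos hr0 2]
    _ = k⁻¹ := by
        rw [integral_Ioi_rpow_of_lt (by norm_num) hk]
        norm_num [rpow_neg_one]

theorem integral_norm_gt_inv_one_add_norm_sq_sq_le {k : ℝ} (hk : 0 < k) :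
    ∫ ξ : ℝ³ in {ξ | k < ‖ξ‖}, ((1 + ‖ξ‖ ^ 2)⁻¹) ^ 2 ≤ 4 * π / k := by
  rw [integral_norm_gt_eq_four_pi_mul hk.le (fun r ↦ ((1 + r ^ 2)⁻¹) ^ 2), div_eq_mul_inv]
  gcongr
  exact integral_Ioi_sq_mul_inv_one_add_sq_sq_le hk

section

variable {E : Type*} [NormedAddCommGroup E] {f : ℝ³ → E}

theorem setIntegral_ball_norm_le (hf : AEStronglyMeasurable f)
    (hf2 : Integrable (fun ξ ↦ ‖f ξ‖ ^ 2)) {k : ℝ} (hk : 0 ≤ k) :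
    ∫ ξ in Metric.ball 0 k, ‖f ξ‖ ≤
      2 * √π * (√3 / 3) * k ^ ((3 : ℝ) / 2) * √(∫ ξ, ‖f ξ‖ ^ 2) := by
  have hvol : √(volume.real (Metric.ball (0 : ℝ³) k)) = 2 * √π * (√3 / 3) * k ^ ((3 : ℝ) / 2) := by
    rw [measureReal_def, EuclideanSpace.volume_ball_fin_three, ENNReal.toReal_mul,
      ENNReal.toReal_pow, ENNReal.toReal_ofReal hk, ENNReal.toReal_ofReal (by positivity),
      rpow_div_two_eq_sqrt _ hk, rpow_ofNat,
      sqrt_eq_iff_eq_sq (by positivity) (by positivity)]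
    have hsq : (2 * √π * (√3 / 3) * √k ^ 3) ^ 2 = 4 / 9 * √π ^ 2 * √3 ^ 2 * (√k ^ 2) ^ 3 := by ring
    rw [hsq, sq_sqrt pi_nonneg, sq_sqrt hk, sq_sqrt (by norm_num)]
    ring
  rw [← hvol]
  exact setIntegral_norm_le_sqrt_measureReal_mul_sqrt measure_ball_lt_top.ne hf hf2

theorem setIntegral_norm_gt_norm_le (hf : AEStronglyMeasurable f)
    (hf2 : Integrable (fun ξ ↦ (1 + ‖ξ‖ ^ 2) ^ 2 * ‖f ξ‖ ^ 2)) {k : ℝ} (hk : 0 < k) :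
    ∫ ξ in {ξ | k < ‖ξ‖}, ‖f ξ‖ ≤
      2 * √π * k ^ (-(1 : ℝ) / 2) * √(∫ ξ, (1 + ‖ξ‖ ^ 2) ^ 2 * ‖f ξ‖ ^ 2) := by
  have hconst : √(4 * π / k) = 2 * √π * k ^ (-(1 : ℝ) / 2) := by
    rw [rpow_div_two_eq_sqrt _ hk.le, rpow_neg_one,
      sqrt_eq_iff_eq_sq (by positivity) (by positivity), mul_pow, mul_pow, inv_pow,
      sq_sqrt pi_nonneg, sq_sqrt hk.le]
    ring
  calc ∫ ξ in {ξ | k < ‖ξ‖}, ‖f ξ‖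
      ≤ √(∫ ξ in {ξ | k < ‖ξ‖}, ((1 + ‖ξ‖ ^ 2)⁻¹) ^ 2) *
          √(∫ ξ, (1 + ‖ξ‖ ^ 2) ^ 2 * ‖f ξ‖ ^ 2) :=
        setIntegral_norm_le_sqrt_mul_sqrt (fun _ ↦ by positivity) (by fun_prop) hf
          (integrable_inv_one_add_norm_sq_sq (by simp)).integrableOn hf2
    _ ≤ √(4 * π / k) * √(∫ ξ, (1 + ‖ξ‖ ^ 2) ^ 2 * ‖f ξ‖ ^ 2) := by
        gcongr
        exact integral_norm_gt_inv_one_add_norm_sq_sq_le hk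
    _ = _ := by rw [hconst]

end

/-- 3D resolution bound for the truncated far-field indicator:
`|q(z) - (2π)^{-3} ∫_{kmin ≤ ‖ξ‖ ≤ kmax} q̂(ξ) e^{i⟨z,ξ⟩} dξ|
  ≤ 2√π (kmax^{-1/2} ‖q‖_{H²} + (√3/3) kmin^{3/2} ‖q‖_{L²})`,
where `q̂(ξ) = ∫ q(y) e^{-i⟨ξ,y⟩} dy`. -/
theorem resolution_bound_3D (q : EuclideanSpace ℝ (Fin 3) → ℂ)
    (hq_cont : Continuous q) (hq_int : Integrable q)
    (hqhat_int : Integrable (fun ξ : EuclideanSpace ℝ (Fin 3) =>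
      ∫ y, q y * Complex.exp (-(Complex.I * ((inner ℝ ξ y : ℝ) : ℂ)))))
    (hH2 : Integrable (fun ξ : EuclideanSpace ℝ (Fin 3) => (1 + ‖ξ‖ ^ 2) ^ 2 *
      ‖∫ y, q y * Complex.exp (-(Complex.I * ((inner ℝ ξ y : ℝ) : ℂ)))‖ ^ 2))
    (z : EuclideanSpace ℝ (Fin 3)) (kmin kmax : ℝ) (hkmin : 0 < kmin) (hk : kmin ≤ kmax) :
    ‖q z - ((2 * Real.pi : ℂ) ^ 3)⁻¹ *
        (∫ ξ in {ξ : EuclideanSpace ℝ (Fin 3) | kmin ≤ ‖ξ‖ ∧ ‖ξ‖ ≤ kmax},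
          (∫ y, q y * Complex.exp (-(Complex.I * ((inner ℝ ξ y : ℝ) : ℂ)))) *
            Complex.exp (Complex.I * ((inner ℝ z ξ : ℝ) : ℂ)))‖ ≤
      2 * Real.sqrt Real.pi *
        (kmax ^ (-(1 : ℝ) / 2) * (((2 * Real.pi) ^ 3)⁻¹ *
            Real.sqrt (∫ ξ, (1 + ‖ξ‖ ^ 2) ^ 2 *
              ‖∫ y, q y * Complex.exp (-(Complex.I * ((inner ℝ ξ y : ℝ) : ℂ)))‖ ^ 2)) +
          Real.sqrt 3 / 3 * kmin ^ ((3 : ℝ) / 2) *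
            (((2 * Real.pi) ^ 3)⁻¹ * Real.sqrt (∫ ξ,
              ‖∫ y, q y * Complex.exp (-(Complex.I * ((inner ℝ ξ y : ℝ) : ℂ)))‖ ^ 2))) := by
  have hkmax : 0 < kmax := hkmin.trans_le hk
  have hF_meas : AEStronglyMeasurable (angularFourier q) := hqhat_int.aestronglyMeasurable
  have hH2' : Integrable (fun ξ ↦ (1 + ‖ξ‖ ^ 2) ^ 2 * ‖angularFourier q ξ‖ ^ 2) := hH2
  have htrunc := norm_sub_setIntegral_annulus_le hq_int (hq_cont.continuousAt (x := z))
    hqhat_int kmin kmax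
  rw [finrank_euclideanSpace_fin] at htrunc
  refine htrunc.trans ?_
  calc ((2 * π) ^ 3)⁻¹ * ((∫ ξ in Metric.ball 0 kmin, ‖angularFourier q ξ‖) +
          ∫ ξ in {ξ | kmax < ‖ξ‖}, ‖angularFourier q ξ‖)
      ≤ ((2 * π) ^ 3)⁻¹ *
          (2 * √π * (√3 / 3) * kmin ^ ((3 : ℝ) / 2) * √(∫ ξ, ‖angularFourier q ξ‖ ^ 2) +
            2 * √π * kmax ^ (-(1 : ℝ) / 2) *
              √(∫ ξ, (1 + ‖ξ‖ ^ 2) ^ 2 * ‖angularFourier q ξ‖ ^ 2)) := by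
        gcongr
        · exact setIntegral_ball_norm_le hF_meas
            (integrable_norm_sq_of_one_add_norm_sq_sq_mul hF_meas hH2') hkmin.le
        · exact setIntegral_norm_gt_norm_le hF_meas hH2' hkmax
    _ = 2 * √π * (kmax ^ (-(1 : ℝ) / 2) *
            (((2 * π) ^ 3)⁻¹ * √(∫ ξ, (1 + ‖ξ‖ ^ 2) ^ 2 * ‖angularFourier q ξ‖ ^ 2)) +
          √3 / 3 * kmin ^ ((3 : ℝ) / 2) *
            (((2 * π) ^ 3)⁻¹ * √(∫ ξ, ‖angularFourier q ξ‖ ^ 2))) := by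
        ring
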